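/- Let d ≥ 1 and let b : [0,∞)^d → ℝ satisfy Assumption (A). For τ > 0 set P_τ = {ν ∈ [0,∞)^d : b(ν) ≤ τ}, and let P = ⋂_{τ>0} (1/τ)P_τ in the increasing case (respectively P = ⋃_{τ>0} (1/τ)P_τ in the decreasing case). Then 0 < |P| < ∞ (where |P| is the Lebesgue outer measure of P). Moreover, if P is Jordan measurable, then |P| = lim_{τ→∞} τ^{−d} · #( P_τ ∩ ℤ^d ), where #(P_τ ∩ ℤ^d) denotes the (finite) number of integer lattice points contained in P_τ. -/

import Mathlib

/-!
Write `Q τ = τ⁻¹ • P_τ` (`normalizedPset b τ`), so that `P_τ = τ • Q τ`. The monotonicity in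
Assumption (A) makes `Q τ` decreasing (resp. increasing) in `τ`, with `P` as its limit, and the
growth bounds `c|ν| ≤ b(ν) ≤ C|ν|` trap `P` between `{x ≥ 0 : |x| ≤ 1/C}` and the ball of radius
`1/c`, whence `0 < |P| < ∞`.

Unit cubes at lattice points show that `τ^{-d} #(τS ∩ ℤ^d)` lies between the volumes of the inner
and outer `1/τ`-neighbourhoods of `S`, so asymptotically it is at least `|interior S|` and at most
`|closure S|`. In the increasing case `τP ⊆ P_τ ⊆ τ Q σ` for `τ ≥ σ`, where `Q σ` is closed and
`|Q σ| → |P|`. In the decreasing case `τ (interior Q σ) ⊆ P_τ ⊆ τP`, and continuity of `b` puts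
`t • Q σ`, up to a null set, inside the interior of `Q (σ/t)` for `t < 1`, so that
`|interior Q σ| → |P|` as well. Jordan measurability of `P` closes both squeezes.
-/

open MeasureTheory Real Filter Pointwise

noncomputable section

/-- Embedding of a multi-index `ν ∈ ℕ^d` into `ℝ^d`. -/
def nuR {d : ℕ} (ν : Fin d → ℕ) : Fin d → ℝ := fun i => (ν i : ℝ)

/-- Euclidean norm on `ℝ^d` (viewed as `Fin d → ℝ`). -/
def eNorm {d : ℕ} (x : Fin d → ℝ) : ℝ := Real.sqrt (∑ i, x i ^ 2)

/-- `τ ↦ b(τν)/τ` is increasing on `(0,∞)` for every nonnegative `ν`. -/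
def IsIncreasingCase {d : ℕ} (b : (Fin d → ℝ) → ℝ) : Prop :=
  ∀ ν : Fin d → ℝ, (∀ i, 0 ≤ ν i) → MonotoneOn (fun τ : ℝ => b (τ • ν) / τ) (Set.Ioi 0)

/-- `τ ↦ b(τν)/τ` is decreasing on `(0,∞)` for every nonnegative `ν`. -/
def IsDecreasingCase {d : ℕ} (b : (Fin d → ℝ) → ℝ) : Prop :=
  ∀ ν : Fin d → ℝ, (∀ i, 0 ≤ ν i) → AntitoneOn (fun τ : ℝ => b (τ • ν) / τ) (Set.Ioi 0)

/-- Assumption (A) on the exponent map `b : [0,∞)^d → ℝ`. -/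
def AssumptionA {d : ℕ} (b : (Fin d → ℝ) → ℝ) : Prop :=
  b 0 = 0 ∧ ContinuousOn b {x | ∀ i, 0 ≤ x i} ∧
  (IsIncreasingCase b ∨ IsDecreasingCase b) ∧
  ∃ c C : ℝ, 0 < c ∧ c < C ∧ ∃ R : ℝ, ∀ x : Fin d → ℝ, (∀ i, 0 ≤ x i) → R ≤ eNorm x →
    c * eNorm x ≤ b x ∧ b x ≤ C * eNorm x

/-- `P_τ = {ν ∈ [0,∞)^d : b(ν) ≤ τ}`. -/
def Pset {d : ℕ} (b : (Fin d → ℝ) → ℝ) (τ : ℝ) : Set (Fin d → ℝ) :=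
  {x | (∀ i, 0 ≤ x i) ∧ b x ≤ τ}

/-- The set of integer lattice points of `ℝ^d`. -/
def latticePoints (d : ℕ) : Set (Fin d → ℝ) :=
  Set.range (fun z : Fin d → ℤ => fun i => (z i : ℝ))


open Metric Bornology Set
open scoped ENNReal Topology

section LatticeCount

variable {d : ℕ}

lemma finite_inter_latticePoints {A : Set (Fin d → ℝ)} (hA : IsBounded A) :
    (A ∩ latticePoints d).Finite := by
  obtain ⟨r, hr⟩ := hA.subset_closedBall 0
  refine ((Set.Finite.pi fun _ => Set.finite_Icc (-⌈r⌉) ⌈r⌉).image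
    fun (z : Fin d → ℤ) i => (z i : ℝ)).subset ?_
  rintro _ ⟨hx, z, rfl⟩
  refine ⟨z, fun i _ => ?_, rfl⟩
  have hzi : |(z i : ℝ)| ≤ ⌈r⌉ := (norm_le_pi_norm (fun i => (z i : ℝ)) i).trans
    ((mem_closedBall_zero_iff.mp (hr hx)).trans (Int.le_ceil r))
  rw [abs_le] at hzi
  exact ⟨by exact_mod_cast hzi.1, by exact_mod_cast hzi.2⟩

lemma ncard_inter_latticePoints_mono {A B : Set (Fin d → ℝ)} (hB : IsBounded B) (h : A ⊆ B) :
    (A ∩ latticePoints d).ncard ≤ (B ∩ latticePoints d).ncard :=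
  Set.ncard_le_ncard (inter_subset_inter_left _ h) (finite_inter_latticePoints hB)

def unitCube (a : Fin d → ℝ) : Set (Fin d → ℝ) := univ.pi fun i => Ico (a i) (a i + 1)

lemma volume_unitCube (a : Fin d → ℝ) : volume (unitCube a) = 1 := by
  simp [unitCube, volume_pi_pi]

lemma mem_unitCube_floor (x : Fin d → ℝ) : x ∈ unitCube (fun i => (⌊x i⌋ : ℝ)) :=
  fun _ _ => ⟨Int.floor_le _, Int.lt_floor_add_one _⟩

lemma eq_of_mem_unitCube {z w : Fin d → ℤ} {x : Fin d → ℝ}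
    (hz : x ∈ unitCube fun i => (z i : ℝ)) (hw : x ∈ unitCube fun i => (w i : ℝ)) :
    (fun i => (z i : ℝ)) = fun i => (w i : ℝ) := by
  funext i
  obtain ⟨hz₁, hz₂⟩ := hz i (mem_univ i)
  obtain ⟨hw₁, hw₂⟩ := hw i (mem_univ i)
  rw [← Int.floor_eq_iff.mpr ⟨hz₁, hz₂⟩, Int.floor_eq_iff.mpr ⟨hw₁, hw₂⟩]

lemma pairwiseDisjoint_unitCube : (latticePoints d).PairwiseDisjoint unitCube := by
  rintro _ ⟨z, rfl⟩ _ ⟨w, rfl⟩ hzw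
  exact disjoint_left.mpr fun x hz hw => hzw (eq_of_mem_unitCube hz hw)

lemma dist_lt_one_of_mem_unitCube {a x : Fin d → ℝ} (hx : x ∈ unitCube a) : dist x a < 1 := by
  refine (dist_pi_lt_iff one_pos).mpr fun i => ?_
  obtain ⟨h₁, h₂⟩ := hx i (mem_univ i)
  rw [Real.dist_eq, abs_lt]
  constructor <;> linarith

lemma unitCube_subset_thickening {A : Set (Fin d → ℝ)} {a : Fin d → ℝ} (ha : a ∈ A) :
    unitCube a ⊆ thickening 1 A :=
  fun _ hx => mem_thickening_iff.mpr ⟨a, ha, dist_lt_one_of_mem_unitCube hx⟩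

lemma ncard_inter_latticePoints_le_volume_thickening {A : Set (Fin d → ℝ)} (hA : IsBounded A) :
    ((A ∩ latticePoints d).ncard : ℝ≥0∞) ≤ volume (thickening 1 A) := by
  have hfin := finite_inter_latticePoints hA
  calc ((A ∩ latticePoints d).ncard : ℝ≥0∞) = ∑ a ∈ hfin.toFinset, volume (unitCube a) := by
        simp [volume_unitCube, Set.ncard_eq_toFinset_card _ hfin]
    _ = volume (⋃ a ∈ hfin.toFinset, unitCube a) := by
        refine (measure_biUnion_finset (pairwiseDisjoint_unitCube.subset ?_) fun a _ =>
          MeasurableSet.univ_pi fun _ => measurableSet_Ico).symm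
        simp
    _ ≤ volume (thickening 1 A) := measure_mono <| iUnion₂_subset fun a ha =>
        unitCube_subset_thickening (hfin.mem_toFinset.mp ha).1

lemma volume_le_ncard_thickening_inter_latticePoints {A : Set (Fin d → ℝ)} (hA : IsBounded A) :
    volume A ≤ ((thickening 1 A ∩ latticePoints d).ncard : ℝ≥0∞) := by
  have hfin := finite_inter_latticePoints (hA.thickening (δ := 1))
  have hcover : A ⊆ ⋃ a ∈ hfin.toFinset, unitCube a := fun x hx => by
    have hfloor := mem_unitCube_floor x
    refine mem_biUnion (hfin.mem_toFinset.mpr ⟨?_, _, rfl⟩) hfloor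
    exact mem_thickening_iff.mpr ⟨x, hx, dist_comm x _ ▸ dist_lt_one_of_mem_unitCube hfloor⟩
  calc volume A ≤ volume (⋃ a ∈ hfin.toFinset, unitCube a) := measure_mono hcover
    _ ≤ ∑ a ∈ hfin.toFinset, volume (unitCube a) := measure_biUnion_finset_le _ _
    _ = ((thickening 1 A ∩ latticePoints d).ncard : ℝ≥0∞) := by
        simp [volume_unitCube, Set.ncard_eq_toFinset_card _ hfin]

lemma smul_thickening {𝕜 E : Type*} [NormedField 𝕜] [NormedAddCommGroup E] [NormedSpace 𝕜 E]
    {c : 𝕜} (hc : c ≠ 0) (δ : ℝ) (S : Set E) :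
    c • thickening δ S = thickening (‖c‖ * δ) (c • S) := by
  simp_rw [thickening_eq_biUnion_ball, smul_set_iUnion₂, _root_.smul_ball hc, ← image_smul,
    biUnion_image]

lemma volume_smul_of_nonneg {τ : ℝ} (hτ : 0 ≤ τ) (S : Set (Fin d → ℝ)) :
    volume (τ • S) = ENNReal.ofReal (τ ^ d) * volume S := by
  simp [Measure.addHaar_smul_of_nonneg volume hτ S]

lemma thickening_one_smul {τ : ℝ} (hτ : 0 < τ) (S : Set (Fin d → ℝ)) :
    thickening 1 (τ • S) = τ • thickening τ⁻¹ S := by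
  rw [smul_thickening hτ.ne', Real.norm_of_nonneg hτ.le, mul_inv_cancel₀ hτ.ne']

lemma ncard_smul_inter_latticePoints_le {S : Set (Fin d → ℝ)} (hS : IsBounded S) {τ : ℝ}
    (hτ : 0 < τ) : ((τ • S ∩ latticePoints d).ncard : ℝ≥0∞) ≤
      ENNReal.ofReal (τ ^ d) * volume (thickening τ⁻¹ S) := by
  rw [← volume_smul_of_nonneg hτ.le, ← thickening_one_smul hτ]
  exact ncard_inter_latticePoints_le_volume_thickening (hS.smul₀ τ)

lemma thickening_setOf_ball_subset (δ : ℝ) (S : Set (Fin d → ℝ)) :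
    thickening δ {x | ball x δ ⊆ S} ⊆ S := fun y hy => by
  obtain ⟨x, hx, hxy⟩ := mem_thickening_iff.mp hy
  exact hx hxy

lemma volume_mul_le_ncard_smul_inter_latticePoints {S : Set (Fin d → ℝ)} (hS : IsBounded S)
    {τ : ℝ} (hτ : 0 < τ) : ENNReal.ofReal (τ ^ d) * volume {x | ball x τ⁻¹ ⊆ S} ≤
      ((τ • S ∩ latticePoints d).ncard : ℝ≥0∞) := by
  set E := {x | ball x τ⁻¹ ⊆ S}
  have hE : IsBounded E := hS.subset fun x hx => hx (mem_ball_self (inv_pos.mpr hτ))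
  rw [← volume_smul_of_nonneg hτ.le]
  refine (volume_le_ncard_thickening_inter_latticePoints (hE.smul₀ τ)).trans ?_
  rw [thickening_one_smul hτ]
  exact_mod_cast ncard_inter_latticePoints_mono (hS.smul₀ τ)
    (smul_set_mono (thickening_setOf_ball_subset _ _))

end LatticeCount

section LatticeAsymptotics

variable {d : ℕ}

lemma eventually_ncard_smul_inter_latticePoints_div_lt {S : Set (Fin d → ℝ)} (hS : IsBounded S)
    {w : ℝ} (hw : (volume (closure S)).toReal < w) :
    ∀ᶠ τ in atTop, ((τ • S ∩ latticePoints d).ncard : ℝ) / τ ^ d < w := by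
  have hlim := (ENNReal.tendsto_toReal hS.closure.measure_lt_top.ne).comp
    (tendsto_measure_thickening (μ := volume) ⟨1, one_pos, hS.thickening.measure_lt_top.ne⟩)
  obtain ⟨δ, hδw, hδ⟩ := ((hlim.eventually (gt_mem_nhds hw)).and self_mem_nhdsWithin).exists
  filter_upwards [eventually_gt_atTop 0, eventually_ge_atTop δ⁻¹] with τ hτ hτδ
  have hcount := ENNReal.toReal_mono (ENNReal.mul_ne_top ENNReal.ofReal_ne_top
    hS.thickening.measure_lt_top.ne) (ncard_smul_inter_latticePoints_le hS hτ)
  rw [ENNReal.toReal_natCast, ENNReal.toReal_mul, ENNReal.toReal_ofReal (by positivity)] at hcount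
  calc ((τ • S ∩ latticePoints d).ncard : ℝ) / τ ^ d ≤ (volume (thickening τ⁻¹ S)).toReal :=
        (div_le_iff₀' (by positivity)).mpr hcount
    _ ≤ (volume (thickening δ S)).toReal :=
        ENNReal.toReal_mono hS.thickening.measure_lt_top.ne
          (measure_mono (thickening_mono (inv_le_of_inv_le₀ hδ hτδ) S))
    _ < w := hδw

lemma iUnion_setOf_ball_subset_eq_interior (S : Set (Fin d → ℝ)) :
    ⋃ n : ℕ, {x | ball x ((n : ℝ) + 1)⁻¹ ⊆ S} = interior S := by
  ext x
  simp only [mem_iUnion, mem_ofPred_eq, mem_interior_iff_mem_nhds, Metric.mem_nhds_iff]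
  constructor
  · rintro ⟨n, hn⟩
    exact ⟨_, by positivity, hn⟩
  · rintro ⟨ε, hε, hball⟩
    obtain ⟨n, hn⟩ := exists_nat_one_div_lt hε
    exact ⟨n, (ball_subset_ball (by simpa using hn.le)).trans hball⟩

lemma eventually_lt_ncard_smul_inter_latticePoints_div {S : Set (Fin d → ℝ)} (hS : IsBounded S)
    {u : ℝ} (hu : u < (volume (interior S)).toReal) :
    ∀ᶠ τ in atTop, u < ((τ • S ∩ latticePoints d).ncard : ℝ) / τ ^ d := by
  have hmono : Monotone fun n : ℕ => {x : Fin d → ℝ | ball x ((n : ℝ) + 1)⁻¹ ⊆ S} :=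
    fun m n hmn x hx => (ball_subset_ball (by gcongr)).trans hx
  have hlim := tendsto_measure_iUnion_atTop (μ := volume) hmono
  rw [iUnion_setOf_ball_subset_eq_interior] at hlim
  obtain ⟨n, hn⟩ :=
    (((ENNReal.tendsto_toReal (hS.subset interior_subset).measure_lt_top.ne).comp hlim).eventually
      (lt_mem_nhds hu)).exists
  filter_upwards [eventually_ge_atTop ((n : ℝ) + 1)] with τ hτ
  have hτ0 : 0 < τ := lt_of_lt_of_le (by positivity) hτ
  have hsub : {x | ball x ((n : ℝ) + 1)⁻¹ ⊆ S} ⊆ {x | ball x τ⁻¹ ⊆ S} :=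
    fun x hx => (ball_subset_ball (inv_anti₀ (by positivity) hτ)).trans hx
  have hcount := ENNReal.toReal_mono (ENNReal.natCast_ne_top _)
    ((mul_le_mul_right (measure_mono hsub) _).trans
      (volume_mul_le_ncard_smul_inter_latticePoints hS hτ0))
  rw [ENNReal.toReal_natCast, ENNReal.toReal_mul, ENNReal.toReal_ofReal (by positivity)] at hcount
  exact hn.trans_le ((le_div_iff₀' (by positivity)).mpr hcount)

lemma tendsto_ncard_inter_latticePoints_div_pow (A : ℝ → Set (Fin d → ℝ)) {v : ℝ}
    (hinner : ∀ u < v, ∃ S, IsBounded S ∧ u < (volume (interior S)).toReal ∧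
      ∀ᶠ τ in atTop, τ • S ⊆ A τ)
    (houter : ∀ w > v, ∃ S, IsBounded S ∧ (volume (closure S)).toReal < w ∧
      ∀ᶠ τ in atTop, A τ ⊆ τ • S) :
    Tendsto (fun τ => ((A τ ∩ latticePoints d).ncard : ℝ) / τ ^ d) atTop (𝓝 v) := by
  refine tendsto_order.2 ⟨fun u hu => ?_, fun w hw => ?_⟩
  · obtain ⟨S, hS, hSu, hSA⟩ := hinner u hu
    obtain ⟨T, hT, -, hAT⟩ := houter (v + 1) (by linarith)
    filter_upwards [eventually_lt_ncard_smul_inter_latticePoints_div hS hSu, hSA, hAT,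
      eventually_gt_atTop 0] with τ hlt hSA hAT hτ
    refine hlt.trans_le (div_le_div_of_nonneg_right ?_ (by positivity))
    exact_mod_cast ncard_inter_latticePoints_mono ((hT.smul₀ τ).subset hAT) hSA
  · obtain ⟨S, hS, hSw, hAS⟩ := houter w hw
    filter_upwards [eventually_ncard_smul_inter_latticePoints_div_lt hS hSw, hAS,
      eventually_gt_atTop 0] with τ hlt hAS hτ
    refine lt_of_le_of_lt (div_le_div_of_nonneg_right ?_ (by positivity)) hlt
    exact_mod_cast ncard_inter_latticePoints_mono (hS.smul₀ τ) hAS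

end LatticeAsymptotics

section EuclideanNorm

variable {d : ℕ}

lemma eNorm_eq_norm_toLp (x : Fin d → ℝ) : eNorm x = ‖WithLp.toLp 2 x‖ := by
  simp [eNorm, EuclideanSpace.norm_eq]

lemma eNorm_smul_of_nonneg {t : ℝ} (ht : 0 ≤ t) (x : Fin d → ℝ) :
    eNorm (t • x) = t * eNorm x := by
  simp [eNorm_eq_norm_toLp, norm_smul, abs_of_nonneg ht]

lemma eNorm_pos {x : Fin d → ℝ} (hx : x ≠ 0) : 0 < eNorm x := by
  rw [eNorm_eq_norm_toLp]
  exact norm_pos_iff.mpr ((WithLp.toLp_eq_zero 2).not.mpr hx)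

lemma norm_le_eNorm (x : Fin d → ℝ) : ‖x‖ ≤ eNorm x := by
  rw [eNorm_eq_norm_toLp]
  exact (pi_norm_le_iff_of_nonneg (norm_nonneg _)).mpr fun i => by
    simpa using PiLp.norm_apply_le (WithLp.toLp 2 x) i

lemma continuous_eNorm : Continuous (eNorm : (Fin d → ℝ) → ℝ) := by
  simp_rw [funext eNorm_eq_norm_toLp]
  exact continuous_norm.comp (PiLp.continuous_toLp 2 _)

lemma eventually_le_eNorm_smul {x : Fin d → ℝ} (hx : x ≠ 0) (R : ℝ) :
    ∀ᶠ τ : ℝ in atTop, 0 < τ ∧ R ≤ eNorm (τ • x) := by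
  filter_upwards [eventually_gt_atTop 0, eventually_ge_atTop (R / eNorm x)] with τ hτ hτR
  rw [eNorm_smul_of_nonneg hτ.le]
  exact ⟨hτ, (div_le_iff₀ (eNorm_pos hx)).mp hτR⟩

lemma volume_setOf_nonneg_eNorm_le_pos {r : ℝ} (hr : 0 < r) :
    0 < volume {x : Fin d → ℝ | (∀ i, 0 ≤ x i) ∧ eNorm x ≤ r} := by
  have h0 : eNorm (0 : Fin d → ℝ) < r := by simpa [eNorm] using hr
  obtain ⟨ε, hε, hball⟩ :=
    Metric.eventually_nhds_iff.mp (continuous_eNorm.continuousAt.eventually (gt_mem_nhds h0))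
  have hcube :
      univ.pi (fun _ => Icc 0 (ε / 2)) ⊆ {x : Fin d → ℝ | (∀ i, 0 ≤ x i) ∧ eNorm x ≤ r} := by
    intro x hx
    have hx0 (i : Fin d) : 0 ≤ x i := (hx i (mem_univ i)).1
    have hxε : ‖x‖ < ε := lt_of_le_of_lt ((pi_norm_le_iff_of_nonneg (by positivity)).mpr
      fun i => (Real.norm_of_nonneg (hx0 i)).trans_le (hx i (mem_univ i)).2) (half_lt_self hε)
    exact ⟨hx0, (hball (by rwa [dist_zero_right])).le⟩
  refine lt_of_lt_of_le ?_ (measure_mono hcube)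
  rw [volume_pi_pi, Real.volume_Icc, Finset.prod_const]
  exact ENNReal.pow_pos (by simpa using hε) _

end EuclideanNorm

section FamilyLimits

variable {α : Type*} {Q : ℝ → Set α}

lemma setOf_eventually_subset_biInter (hQ : AntitoneOn Q (Ioi 0)) :
    {x | ∀ᶠ τ in atTop, x ∈ Q τ} ⊆ ⋂ τ ∈ Ioi (0 : ℝ), Q τ := fun _ hx => by
  obtain ⟨T, hT⟩ := eventually_atTop.mp hx
  refine mem_iInter₂.mpr fun τ hτ => hQ hτ ?_ (le_max_left τ T) (hT _ (le_max_right τ T))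
  exact lt_of_lt_of_le hτ (le_max_left τ T)

lemma biInter_subset_setOf_frequently :
    ⋂ τ ∈ Ioi (0 : ℝ), Q τ ⊆ {x | ∃ᶠ τ in atTop, x ∈ Q τ} := fun _ hx =>
  (eventually_gt_atTop 0).frequently.mono fun τ hτ => mem_iInter₂.mp hx τ hτ

lemma setOf_eventually_subset_biUnion :
    {x | ∀ᶠ τ in atTop, x ∈ Q τ} ⊆ ⋃ τ ∈ Ioi (0 : ℝ), Q τ := fun x hx => by
  obtain ⟨τ, hτ, hxτ⟩ := ((eventually_gt_atTop 0).and hx).exists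
  exact mem_biUnion hτ hxτ

lemma biUnion_subset_setOf_frequently (hQ : MonotoneOn Q (Ioi 0)) :
    ⋃ τ ∈ Ioi (0 : ℝ), Q τ ⊆ {x | ∃ᶠ τ in atTop, x ∈ Q τ} := fun x hx => by
  obtain ⟨σ, hσ, hxσ⟩ := mem_iUnion₂.mp hx
  refine (eventually_ge_atTop σ).frequently.mono fun τ hστ => hQ hσ ?_ hστ hxσ
  exact lt_of_lt_of_le hσ hστ

lemma biInter_Ioi_eq_iInter_nat (hQ : AntitoneOn Q (Ioi 0)) :
    ⋂ τ ∈ Ioi (0 : ℝ), Q τ = ⋂ n : ℕ, Q (n + 1) := by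
  refine (subset_iInter fun n => biInter_subset_of_mem (mem_Ioi.mpr (Nat.cast_add_one_pos n)))
    |>.antisymm (subset_iInter₂ fun τ hτ => ?_)
  obtain ⟨n, hn⟩ := exists_nat_ge τ
  exact (iInter_subset _ n).trans (hQ hτ (mem_Ioi.mpr (Nat.cast_add_one_pos n)) (by linarith))

lemma biUnion_Ioi_eq_iUnion_nat (hQ : MonotoneOn Q (Ioi 0)) :
    ⋃ τ ∈ Ioi (0 : ℝ), Q τ = ⋃ n : ℕ, Q (n + 1) := by
  refine (iUnion₂_subset fun τ hτ => ?_).antisymm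
    (iUnion_subset fun n => subset_biUnion_of_mem (mem_Ioi.mpr (Nat.cast_add_one_pos n)))
  obtain ⟨n, hn⟩ := exists_nat_ge τ
  exact (hQ hτ (mem_Ioi.mpr (Nat.cast_add_one_pos n)) (by linarith)).trans
    (subset_iUnion (fun n : ℕ => Q (n + 1)) n)

lemma antitone_natCast_add_one (hQ : AntitoneOn Q (Ioi 0)) :
    Antitone fun n : ℕ => Q (n + 1) := fun m n hmn =>
  hQ (mem_Ioi.mpr (Nat.cast_add_one_pos m)) (mem_Ioi.mpr (Nat.cast_add_one_pos n)) (by gcongr)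

lemma monotone_natCast_add_one (hQ : MonotoneOn Q (Ioi 0)) :
    Monotone fun n : ℕ => Q (n + 1) := fun m n hmn =>
  hQ (mem_Ioi.mpr (Nat.cast_add_one_pos m)) (mem_Ioi.mpr (Nat.cast_add_one_pos n)) (by gcongr)

end FamilyLimits

section NormalizedSublevelSets

variable {d : ℕ} {b : (Fin d → ℝ) → ℝ}

def normalizedPset (b : (Fin d → ℝ) → ℝ) (τ : ℝ) : Set (Fin d → ℝ) := τ⁻¹ • Pset b τ

lemma mem_normalizedPset {τ : ℝ} (hτ : 0 < τ) {x : Fin d → ℝ} :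
    x ∈ normalizedPset b τ ↔ (∀ i, 0 ≤ x i) ∧ b (τ • x) ≤ τ := by
  rw [normalizedPset, mem_smul_set_iff_inv_smul_mem₀ (inv_ne_zero hτ.ne'), inv_inv, Pset,
    mem_ofPred_eq]
  simp only [Pi.smul_apply, smul_eq_mul, mul_nonneg_iff_of_pos_left hτ]

lemma smul_normalizedPset {τ : ℝ} (hτ : 0 < τ) : τ • normalizedPset b τ = Pset b τ :=
  smul_inv_smul₀ hτ.ne' _

lemma normalizedPset_antitoneOn (hinc : IsIncreasingCase b) :
    AntitoneOn (normalizedPset b) (Ioi 0) := fun σ hσ τ hτ hστ x hx => by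
  rw [mem_normalizedPset hτ] at hx
  rw [mem_normalizedPset hσ]
  refine ⟨hx.1, (div_le_one hσ).mp ?_⟩
  exact (hinc x hx.1 hσ hτ hστ).trans ((div_le_one hτ).mpr hx.2)

lemma normalizedPset_monotoneOn (hdec : IsDecreasingCase b) :
    MonotoneOn (normalizedPset b) (Ioi 0) := fun σ hσ τ hτ hστ x hx => by
  rw [mem_normalizedPset hσ] at hx
  rw [mem_normalizedPset hτ]
  refine ⟨hx.1, (div_le_one hτ).mp ?_⟩
  exact (hdec x hx.1 hσ hτ hστ).trans ((div_le_one hσ).mpr hx.2)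

lemma eventually_mem_normalizedPset (hb0 : b 0 = 0) {C R : ℝ} (hC : 0 < C)
    (hup : ∀ x, (∀ i, 0 ≤ x i) → R ≤ eNorm x → b x ≤ C * eNorm x) {x : Fin d → ℝ}
    (hx : ∀ i, 0 ≤ x i) (hxC : eNorm x ≤ C⁻¹) : ∀ᶠ τ in atTop, x ∈ normalizedPset b τ := by
  rcases eq_or_ne x 0 with rfl | hx0
  · filter_upwards [eventually_gt_atTop 0] with τ hτ
    rw [mem_normalizedPset hτ, smul_zero, hb0]
    exact ⟨hx, hτ.le⟩
  rw [inv_eq_one_div, le_div_iff₀' hC] at hxC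
  filter_upwards [eventually_le_eNorm_smul hx0 R] with τ ⟨hτ, hR⟩
  rw [mem_normalizedPset hτ]
  refine ⟨hx, ?_⟩
  calc b (τ • x) ≤ C * eNorm (τ • x) := hup _ (fun i => mul_nonneg hτ.le (hx i)) hR
    _ = τ * (C * eNorm x) := by rw [eNorm_smul_of_nonneg hτ.le]; ring
    _ ≤ τ := mul_le_of_le_one_right hτ.le hxC

lemma eNorm_le_of_frequently_mem_normalizedPset {c R : ℝ} (hc : 0 < c)
    (hlow : ∀ x, (∀ i, 0 ≤ x i) → R ≤ eNorm x → c * eNorm x ≤ b x) {x : Fin d → ℝ}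
    (hx : ∃ᶠ τ in atTop, x ∈ normalizedPset b τ) : eNorm x ≤ c⁻¹ := by
  rcases eq_or_ne x 0 with rfl | hx0
  · simp [eNorm, hc.le]
  obtain ⟨τ, hxτ, hτ, hR⟩ := (hx.and_eventually (eventually_le_eNorm_smul hx0 R)).exists
  rw [mem_normalizedPset hτ] at hxτ
  have hcτ : τ * (c * eNorm x) ≤ τ * 1 :=
    calc τ * (c * eNorm x) = c * eNorm (τ • x) := by rw [eNorm_smul_of_nonneg hτ.le]; ring
      _ ≤ b (τ • x) := hlow _ (fun i => mul_nonneg hτ.le (hxτ.1 i)) hR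
      _ ≤ τ * 1 := (mul_one τ).symm ▸ hxτ.2
  rw [inv_eq_one_div, le_div_iff₀' hc]
  exact le_of_mul_le_mul_left hcτ hτ

lemma isBounded_Pset {c R : ℝ} (hc : 0 < c)
    (hlow : ∀ x, (∀ i, 0 ≤ x i) → R ≤ eNorm x → c * eNorm x ≤ b x) (τ : ℝ) :
    IsBounded (Pset b τ) := by
  refine (isBounded_closedBall (x := 0) (r := max R (τ / c))).subset fun x hx => ?_
  rw [mem_closedBall_zero_iff]
  refine (norm_le_eNorm x).trans ?_
  rcases le_total R (eNorm x) with hR | hR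
  · exact le_max_of_le_right ((le_div_iff₀' hc).mpr ((hlow x hx.1 hR).trans hx.2))
  · exact le_max_of_le_left hR

lemma isClosed_Pset (hcont : ContinuousOn b {x | ∀ i, 0 ≤ x i}) (τ : ℝ) : IsClosed (Pset b τ) := by
  refine hcont.preimage_isClosed_of_isClosed ?_ isClosed_Iic
  simp only [ofPred_forall]
  exact isClosed_iInter fun i => isClosed_le continuous_const (continuous_apply i)

lemma isClosed_normalizedPset (hcont : ContinuousOn b {x | ∀ i, 0 ≤ x i}) (τ : ℝ) :
    IsClosed (normalizedPset b τ) :=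
  (isClosed_Pset hcont τ).smul₀ τ⁻¹

lemma isOpen_setOf_forall_pos : IsOpen {x : Fin d → ℝ | ∀ i, 0 < x i} := by
  simp only [ofPred_forall]
  exact isOpen_iInter_of_finite fun i => isOpen_lt continuous_const (continuous_apply i)

/-- Shrinking by `t < 1` pushes the boundary `b(σx) = σ` strictly inside the next sublevel set. -/
lemma smul_inter_subset_interior_normalizedPset (hcont : ContinuousOn b {x | ∀ i, 0 ≤ x i})
    {σ t : ℝ} (hσ : 0 < σ) (ht₀ : 0 < t) (ht₁ : t < 1) :
    t • (normalizedPset b σ ∩ {x | ∀ i, 0 < x i}) ⊆ interior (normalizedPset b (σ / t)) := by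
  have hσt : 0 < σ / t := div_pos hσ ht₀
  have hscaled : ContinuousOn (fun y => b ((σ / t) • y)) {x : Fin d → ℝ | ∀ i, 0 < x i} :=
    hcont.comp (continuous_const_smul _).continuousOn fun y hy i => mul_nonneg hσt.le (hy i).le
  set W := {x : Fin d → ℝ | ∀ i, 0 < x i} ∩ (fun y => b ((σ / t) • y)) ⁻¹' Iio (σ / t)
  have hW : IsOpen W := hscaled.isOpen_inter_preimage isOpen_setOf_forall_pos isOpen_Iio
  have hWQ : W ⊆ normalizedPset b (σ / t) := fun y hy =>
    (mem_normalizedPset hσt).mpr ⟨fun i => (hy.1 i).le, le_of_lt hy.2⟩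
  rintro _ ⟨x, ⟨hxQ, hxpos⟩, rfl⟩
  refine interior_maximal hWQ hW ⟨fun i => mul_pos ht₀ (hxpos i), ?_⟩
  rw [mem_normalizedPset hσ] at hxQ
  show b ((σ / t) • t • x) < σ / t
  rw [smul_smul, div_mul_cancel₀ σ ht₀.ne']
  exact hxQ.2.trans_lt ((lt_div_iff₀ ht₀).mpr (mul_lt_of_lt_one_right hσ ht₁))

lemma volume_setOf_exists_eq_zero : volume {x : Fin d → ℝ | ∃ i, x i = 0} = 0 := by
  rw [ofPred_exists]
  exact measure_iUnion_null fun i => Measure.pi_hyperplane _ i 0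

lemma volume_inter_setOf_forall_pos {A : Set (Fin d → ℝ)} (hA : A ⊆ {x | ∀ i, 0 ≤ x i}) :
    volume (A ∩ {x | ∀ i, 0 < x i}) = volume A := by
  refine (measure_mono inter_subset_left).antisymm ?_
  rw [← measure_sdiff_null volume_setOf_exists_eq_zero]
  refine measure_mono fun x ⟨hxA, hx0⟩ => ⟨hxA, fun i => (hA hxA i).lt_of_ne ?_⟩
  exact fun h => hx0 ⟨i, h.symm⟩

lemma volume_le_volume_interior_normalizedPset (hcont : ContinuousOn b {x | ∀ i, 0 ≤ x i})
    {σ t : ℝ} (hσ : 0 < σ) (ht₀ : 0 < t) (ht₁ : t < 1) :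
    ENNReal.ofReal (t ^ d) * volume (normalizedPset b σ) ≤
      volume (interior (normalizedPset b (σ / t))) := by
  have hQ : normalizedPset b σ ⊆ {x | ∀ i, 0 ≤ x i} := fun x hx =>
    ((mem_normalizedPset hσ).mp hx).1
  rw [← volume_inter_setOf_forall_pos hQ, ← volume_smul_of_nonneg ht₀.le]
  exact measure_mono (smul_inter_subset_interior_normalizedPset hcont hσ ht₀ ht₁)

end NormalizedSublevelSets

section LatticeCountOfPset

variable {d : ℕ} {b : (Fin d → ℝ) → ℝ}

lemma tendsto_ncard_Pset_div_pow_of_isIncreasingCase (hinc : IsIncreasingCase b)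
    (hcont : ContinuousOn b {x | ∀ i, 0 ≤ x i}) (hbd : ∀ τ, IsBounded (Pset b τ))
    (hfr : volume (frontier (⋂ τ ∈ Ioi (0 : ℝ), normalizedPset b τ)) = 0) :
    Tendsto (fun τ => ((Pset b τ ∩ latticePoints d).ncard : ℝ) / τ ^ d) atTop
      (𝓝 (volume (⋂ τ ∈ Ioi (0 : ℝ), normalizedPset b τ)).toReal) := by
  set P := ⋂ τ ∈ Ioi (0 : ℝ), normalizedPset b τ
  have hQ := normalizedPset_antitoneOn hinc
  have hQb (τ : ℝ) : IsBounded (normalizedPset b τ) := (hbd τ).smul₀ τ⁻¹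
  have hPQ {τ : ℝ} (hτ : 0 < τ) : P ⊆ normalizedPset b τ := biInter_subset_of_mem hτ
  have hPb : IsBounded P := (hQb 1).subset (hPQ one_pos)
  refine tendsto_ncard_inter_latticePoints_div_pow _ (fun u hu => ?_) (fun w hw => ?_)
  · refine ⟨P, hPb, by rwa [measure_interior_of_null_frontier hfr], ?_⟩
    filter_upwards [eventually_gt_atTop 0] with τ hτ
    rw [← smul_normalizedPset hτ]
    exact smul_set_mono (hPQ hτ)
  · have hlim : Tendsto (fun n : ℕ => volume (normalizedPset b (n + 1))) atTop (𝓝 (volume P)) := by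
      have hPn : P = ⋂ n : ℕ, normalizedPset b (n + 1) := biInter_Ioi_eq_iInter_nat hQ
      rw [hPn]
      exact tendsto_measure_iInter_atTop
        (fun n => (isClosed_normalizedPset hcont _).measurableSet.nullMeasurableSet)
        (antitone_natCast_add_one hQ) ⟨0, (hQb _).measure_lt_top.ne⟩
    obtain ⟨n, hn⟩ := (((ENNReal.tendsto_toReal hPb.measure_lt_top.ne).comp hlim).eventually
      (gt_mem_nhds hw)).exists
    refine ⟨normalizedPset b (n + 1), hQb _, ?_, ?_⟩
    · rwa [(isClosed_normalizedPset hcont _).closure_eq]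
    filter_upwards [eventually_ge_atTop ((n : ℝ) + 1)] with τ hτ
    have hτ₀ : 0 < τ := (Nat.cast_add_one_pos n).trans_le hτ
    rw [← smul_normalizedPset hτ₀]
    exact smul_set_mono (hQ (mem_Ioi.mpr (Nat.cast_add_one_pos n)) hτ₀ hτ)

lemma exists_lt_volume_interior_normalizedPset (hdec : IsDecreasingCase b)
    (hcont : ContinuousOn b {x | ∀ i, 0 ≤ x i})
    (hPb : IsBounded (⋃ τ ∈ Ioi (0 : ℝ), normalizedPset b τ)) {u : ℝ}
    (hu : u < (volume (⋃ τ ∈ Ioi (0 : ℝ), normalizedPset b τ)).toReal) :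
    ∃ σ > 0, u < (volume (interior (normalizedPset b σ))).toReal := by
  set P := ⋃ τ ∈ Ioi (0 : ℝ), normalizedPset b τ
  have hQ := normalizedPset_monotoneOn hdec
  have hlim : Tendsto (fun n : ℕ => volume (normalizedPset b (n + 1))) atTop (𝓝 (volume P)) := by
    have hPn : P = ⋃ n : ℕ, normalizedPset b (n + 1) := biUnion_Ioi_eq_iUnion_nat hQ
    rw [hPn]
    exact tendsto_measure_iUnion_atTop (monotone_natCast_add_one hQ)
  obtain ⟨n, hn⟩ := (((ENNReal.tendsto_toReal hPb.measure_lt_top.ne).comp hlim).eventually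
    (lt_mem_nhds hu)).exists
  set a := (volume (normalizedPset b (n + 1))).toReal
  have hpow : Tendsto (fun t : ℝ => t ^ d * a) (𝓝[<] 1) (𝓝 a) := by
    have hcont_pow : Continuous fun t : ℝ => t ^ d * a := by fun_prop
    simpa using (hcont_pow.tendsto 1).mono_left nhdsWithin_le_nhds
  obtain ⟨t, hut, ht₀, ht₁⟩ :=
    ((hpow.eventually (lt_mem_nhds hn)).and (Ioo_mem_nhdsLT zero_lt_one)).exists
  have hσ : 0 < (n + 1) / t := div_pos (Nat.cast_add_one_pos n) ht₀
  refine ⟨_, hσ, hut.trans_le ?_⟩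
  have hvol := ENNReal.toReal_mono
    ((hPb.subset (interior_subset.trans (subset_biUnion_of_mem hσ))).measure_lt_top.ne)
    (volume_le_volume_interior_normalizedPset hcont (Nat.cast_add_one_pos n) ht₀ ht₁)
  rwa [ENNReal.toReal_mul, ENNReal.toReal_ofReal (by positivity)] at hvol

lemma tendsto_ncard_Pset_div_pow_of_isDecreasingCase (hdec : IsDecreasingCase b)
    (hcont : ContinuousOn b {x | ∀ i, 0 ≤ x i})
    (hPb : IsBounded (⋃ τ ∈ Ioi (0 : ℝ), normalizedPset b τ))
    (hfr : volume (frontier (⋃ τ ∈ Ioi (0 : ℝ), normalizedPset b τ)) = 0) :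
    Tendsto (fun τ => ((Pset b τ ∩ latticePoints d).ncard : ℝ) / τ ^ d) atTop
      (𝓝 (volume (⋃ τ ∈ Ioi (0 : ℝ), normalizedPset b τ)).toReal) := by
  set P := ⋃ τ ∈ Ioi (0 : ℝ), normalizedPset b τ
  have hQ := normalizedPset_monotoneOn hdec
  refine tendsto_ncard_inter_latticePoints_div_pow _ (fun u hu => ?_)
    (fun w hw => ⟨P, hPb, by rwa [measure_closure_of_null_frontier hfr], ?_⟩)
  · obtain ⟨σ, hσ, hσu⟩ := exists_lt_volume_interior_normalizedPset hdec hcont hPb hu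
    refine ⟨_, hPb.subset (interior_subset.trans (subset_biUnion_of_mem hσ)),
      by rwa [interior_interior], ?_⟩
    filter_upwards [eventually_ge_atTop σ] with τ hτ
    rw [← smul_normalizedPset (hσ.trans_le hτ)]
    exact smul_set_mono (interior_subset.trans (hQ hσ (hσ.trans_le hτ) hτ))
  · filter_upwards [eventually_gt_atTop 0] with τ hτ
    rw [← smul_normalizedPset hτ]
    exact smul_set_mono (subset_biUnion_of_mem hτ)

end LatticeCountOfPset

theorem stmt1_general {d : ℕ} (b : (Fin d → ℝ) → ℝ) (hb : AssumptionA b)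
    (P : Set (Fin d → ℝ))
    (hPinc : IsIncreasingCase b → P = ⋂ τ ∈ Set.Ioi (0 : ℝ), τ⁻¹ • Pset b τ)
    (hPdec : IsDecreasingCase b → P = ⋃ τ ∈ Set.Ioi (0 : ℝ), τ⁻¹ • Pset b τ) :
    0 < volume P ∧ volume P < ⊤ ∧
      (volume (frontier P) = 0 →
        Tendsto (fun τ : ℝ => ((Pset b τ ∩ latticePoints d).ncard : ℝ) / τ ^ d)
          atTop (nhds (volume P).toReal)) := by
  obtain ⟨hb0, hcont, hcase, c, C, hc, hcC, R, hR⟩ := hb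
  have hlow (x) (hx : ∀ i, 0 ≤ x i) (hxR : R ≤ eNorm x) := (hR x hx hxR).1
  have hup (x) (hx : ∀ i, 0 ≤ x i) (hxR : R ≤ eNorm x) := (hR x hx hxR).2
  have hsandwich : {x | ∀ᶠ τ in atTop, x ∈ normalizedPset b τ} ⊆ P ∧
      P ⊆ {x | ∃ᶠ τ in atTop, x ∈ normalizedPset b τ} := by
    rcases hcase with hinc | hdec
    · rw [hPinc hinc]
      exact ⟨setOf_eventually_subset_biInter (normalizedPset_antitoneOn hinc),
        biInter_subset_setOf_frequently⟩
    · rw [hPdec hdec]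
      exact ⟨setOf_eventually_subset_biUnion,
        biUnion_subset_setOf_frequently (normalizedPset_monotoneOn hdec)⟩
  have hPb : IsBounded P := (isBounded_closedBall (x := 0) (r := c⁻¹)).subset fun x hx =>
    mem_closedBall_zero_iff.mpr <| (norm_le_eNorm x).trans <|
      eNorm_le_of_frequently_mem_normalizedPset hc hlow (hsandwich.2 hx)
  have hC : 0 < C := hc.trans hcC
  refine ⟨(volume_setOf_nonneg_eNorm_le_pos (inv_pos.mpr hC)).trans_le <| measure_mono
    fun x hx => hsandwich.1 (eventually_mem_normalizedPset hb0 hC hup hx.1 hx.2),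
    hPb.measure_lt_top, fun hfr => ?_⟩
  rcases hcase with hinc | hdec
  · rw [hPinc hinc] at hfr ⊢
    exact tendsto_ncard_Pset_div_pow_of_isIncreasingCase hinc hcont
      (isBounded_Pset hc hlow) hfr
  · rw [hPdec hdec] at hPb hfr ⊢
    exact tendsto_ncard_Pset_div_pow_of_isDecreasingCase hdec hcont hPb hfr

/-- Lemma 2.2 (Lemma 4 of the quasi-optimal analysis): `0 < |P| < ∞`, and if `P` is
Jordan measurable then `|P| = lim_{τ→∞} τ^{−d} · #(P_τ ∩ ℤ^d)`. -/
theorem stmt1 {d : ℕ} (hd : 1 ≤ d) (b : (Fin d → ℝ) → ℝ) (hb : AssumptionA b)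
    (P : Set (Fin d → ℝ))
    (hPinc : IsIncreasingCase b → P = ⋂ τ ∈ Set.Ioi (0 : ℝ), τ⁻¹ • Pset b τ)
    (hPdec : IsDecreasingCase b → P = ⋃ τ ∈ Set.Ioi (0 : ℝ), τ⁻¹ • Pset b τ) :
    0 < volume P ∧ volume P < ⊤ ∧
      (volume (frontier P) = 0 →
        Tendsto (fun τ : ℝ => ((Pset b τ ∩ latticePoints d).ncard : ℝ) / τ ^ d)
          atTop (nhds (volume P).toReal)) :=
  stmt1_general b hb P hPinc hPdec

end
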